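/- If a linear system y = W x has a solution x* with ‖x*‖₀ < spark(W)/2, then x* is the unique solution among all vectors with ‖x‖₀ < spark(W)/2; moreover it is the sparsest solution. -/
import Mathlib


open Matrix MeasureTheory ProbabilityTheory

noncomputable def supp {m : ℕ} (x : Fin m → ℝ) : Finset (Fin m) :=
  (Set.toFinite {j | x j ≠ 0}).toFinset

noncomputable def norm0 {m : ℕ} (x : Fin m → ℝ) : ℕ := (supp x).card

def rowSub {n m : ℕ} (W : Matrix (Fin n) (Fin m) ℝ) (S : Finset (Fin n)) :
    Matrix {i // i ∈ S} (Fin m) ℝ := fun i j => W i.1 j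

noncomputable def spark {ι : Type*} [Fintype ι] {m : ℕ} (W : Matrix ι (Fin m) ℝ) : ℕ :=
  sInf ({m + 1} ∪ {k | ∃ x : Fin m → ℝ, x ≠ 0 ∧ W.mulVec x = 0 ∧ norm0 x = k})

noncomputable def subspark {n m : ℕ} (W : Matrix (Fin n) (Fin m) ℝ) (s : ℕ) : ℕ :=
  sInf {k | ∃ S : Finset (Fin n), S.card = s ∧ spark (rowSub W S) = k}

noncomputable def subrank {n m : ℕ} (W : Matrix (Fin n) (Fin m) ℝ) (s : ℕ) : ℕ :=
  sInf {k | ∃ S : Finset (Fin n), S.card = s ∧ (rowSub W S).rank = k}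

def vrelu {k : ℕ} (v : Fin k → ℝ) : Fin k → ℝ := fun i => max (v i) 0

noncomputable def lambdaMin {s : ℕ} (M : Matrix (Fin s) (Fin s) ℝ) : ℝ :=
  sInf {r : ℝ | ∃ v : Fin s → ℝ, v ≠ 0 ∧ M.mulVec v = r • v}

noncomputable def lambdaMax {s : ℕ} (M : Matrix (Fin s) (Fin s) ℝ) : ℝ :=
  sSup {r : ℝ | ∃ v : Fin s → ℝ, v ≠ 0 ∧ M.mulVec v = r • v}


lemma supp_mem {m : ℕ} (x : Fin m → ℝ) (j : Fin m) : j ∈ supp x ↔ x j ≠ 0 := by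
  simp [supp]

lemma norm0_sub_le {m : ℕ} (x y : Fin m → ℝ) : norm0 (x - y) ≤ norm0 x + norm0 y := by
  have h : supp (x - y) ⊆ supp x ∪ supp y := by
    intro j hj
    rw [supp_mem] at hj
    simp only [Finset.mem_union, supp_mem]
    by_contra hc
    push_neg at hc
    simp [Pi.sub_apply, hc.1, hc.2] at hj
  calc (supp (x - y)).card ≤ (supp x ∪ supp y).card := Finset.card_le_card h
    _ ≤ _ := Finset.card_union_le _ _

lemma spark_le {n m : ℕ} (W : Matrix (Fin n) (Fin m) ℝ) (z : Fin m → ℝ)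
    (hz : z ≠ 0) (hWz : W.mulVec z = 0) : spark W ≤ norm0 z := by
  apply Nat.sInf_le
  exact Or.inr ⟨z, hz, hWz, rfl⟩

theorem sparse_uniqueness {n m : ℕ} (W : Matrix (Fin n) (Fin m) ℝ) (y : Fin n → ℝ)
    (xs : Fin m → ℝ) (hsol : W.mulVec xs = y) (hsp : 2 * norm0 xs < spark W) :
    (∀ x : Fin m → ℝ, W.mulVec x = y → 2 * norm0 x < spark W → x = xs) ∧
    (∀ x : Fin m → ℝ, W.mulVec x = y → norm0 xs ≤ norm0 x) := by
  have key : ∀ x : Fin m → ℝ, W.mulVec x = y → x ≠ xs → spark W ≤ norm0 x + norm0 xs := by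
    intro x hx hne
    have hz : x - xs ≠ 0 := sub_ne_zero.mpr hne
    have hWz : W.mulVec (x - xs) = 0 := by
      rw [Matrix.mulVec_sub, hx, hsol, sub_self]
    exact (spark_le W _ hz hWz).trans (norm0_sub_le x xs)
  constructor
  · intro x hx hxsp
    by_contra hne
    have := key x hx hne
    omega
  · intro x hx
    by_contra hlt
    push_neg at hlt
    have hne : x ≠ xs := by rintro rfl; omega
    have := key x hx hne
    omega
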